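/- Let G be the graph on the 21 vertices {x_i, y_i, z_i : i ∈ ℤ/7ℤ} with edges {x_i, x_{i+1}}, {x_i, y_i}, {y_i, z_i}, {z_i, y_{i+1}}, {z_i, z_{i+3}} (indices modulo 7). Then STAB(G) is a proper subset of HSTAB(G); in particular, G is not h-perfect. -/

import Mathlib

variable {V : Type*}

/-- A stable (independent) set of a graph. -/
def IsStableSet (G : SimpleGraph V) (S : Set V) : Prop :=
  ∀ u ∈ S, ∀ v ∈ S, ¬ G.Adj u v

/-- The vertex set of a cycle subgraph of `G`, given by an injective
parametrization `c : ZMod m → V` (`m ≥ 3`) with consecutive vertices adjacent. -/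
def IsCycleSet (G : SimpleGraph V) (C : Set V) : Prop :=
  ∃ (m : ℕ) (c : ZMod m → V), 3 ≤ m ∧ Function.Injective c ∧
    (∀ i, G.Adj (c i) (c (i + 1))) ∧ C = Set.range c

/-- The vertex set of an odd cycle subgraph of `G`. -/
def IsOddCycleSet (G : SimpleGraph V) (C : Set V) : Prop :=
  ∃ (m : ℕ) (c : ZMod m → V), 3 ≤ m ∧ Odd m ∧ Function.Injective c ∧
    (∀ i, G.Adj (c i) (c (i + 1))) ∧ C = Set.range c

/-- The vertex set of a chordless odd cycle subgraph of `G`: the only edges of `G`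
between vertices of the cycle are the cycle edges. -/
def IsChordlessOddCycleSet (G : SimpleGraph V) (C : Set V) : Prop :=
  ∃ (m : ℕ) (c : ZMod m → V), 3 ≤ m ∧ Odd m ∧ Function.Injective c ∧
    (∀ i, G.Adj (c i) (c (i + 1))) ∧
    (∀ i j, G.Adj (c i) (c j) → j = i + 1 ∨ i = j + 1) ∧
    C = Set.range c

/-- A maximal clique of `G`. -/
def IsMaximalClique (G : SimpleGraph V) (K : Set V) : Prop :=
  G.IsClique K ∧ ∀ K' : Set V, G.IsClique K' → K ⊆ K' → K = K'

/-- Membership in HSTAB(G). -/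
def memHSTAB (G : SimpleGraph V) (f : V → ℝ) : Prop :=
  (∀ x, 0 ≤ f x) ∧
  (∀ K : Set V, G.IsClique K → (∑ᶠ v ∈ K, f v) ≤ 1) ∧
  (∀ C : Set V, IsOddCycleSet G C → (∑ᶠ v ∈ C, f v) ≤ ((C.ncard : ℝ) - 1) / 2)

/-- Membership in TSTAB(G). -/
def memTSTAB (G : SimpleGraph V) (f : V → ℝ) : Prop :=
  (∀ x, 0 ≤ f x ∧ f x ≤ 1) ∧
  (∀ x y, G.Adj x y → f x + f y ≤ 1) ∧
  (∀ C : Set V, IsOddCycleSet G C → (∑ᶠ v ∈ C, f v) ≤ ((C.ncard : ℝ) - 1) / 2)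

/-- Membership in QSTAB(G). -/
def memQSTAB (G : SimpleGraph V) (f : V → ℝ) : Prop :=
  (∀ x, 0 ≤ f x) ∧
  (∀ K : Set V, G.IsClique K → (∑ᶠ v ∈ K, f v) ≤ 1)

/-- The stable set polytope STAB(G). -/
def STAB (G : SimpleGraph V) : Set (V → ℝ) :=
  convexHull ℝ {f : V → ℝ | ∃ S : Set V, IsStableSet G S ∧ f = S.indicator 1}

/-- The set `U^(n)` of the paper, as a predicate on pairs `(g, d)`. -/
def memU (G : SimpleGraph V) (n : ℤ) (g : V → ℤ) (d : ℤ) : Prop :=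
  (∀ v, n ≤ g v) ∧
  (∀ K : Set V, IsMaximalClique G K → (∑ᶠ v ∈ K, g v) ≤ d - n) ∧
  (∀ C : Set V, IsChordlessOddCycleSet G C → 5 ≤ C.ncard →
    2 * (∑ᶠ v ∈ C, g v) ≤ d * ((C.ncard : ℤ) - 1) - 2 * n)
/-- The 21 vertices `x_i, y_i, z_i`, `i ∈ ℤ/7ℤ`. -/
inductive Vtx : Type
  | x : ZMod 7 → Vtx
  | y : ZMod 7 → Vtx
  | z : ZMod 7 → Vtx
  deriving DecidableEq, Fintype

/-- The oriented edge relation of the example graph. -/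
def paperRel : Vtx → Vtx → Prop := fun u v =>
  (∃ i, u = Vtx.x i ∧ v = Vtx.x (i + 1)) ∨
  (∃ i, u = Vtx.x i ∧ v = Vtx.y i) ∨
  (∃ i, u = Vtx.y i ∧ v = Vtx.z i) ∨
  (∃ i, u = Vtx.z i ∧ v = Vtx.y (i + 1)) ∨
  (∃ i, u = Vtx.z i ∧ v = Vtx.z (i + 3))

instance : DecidableRel paperRel := fun u v => by
  unfold paperRel; infer_instance

/-- The example graph of the paper. -/
def paperGraph : SimpleGraph Vtx where
  Adj u v := paperRel u v ∨ paperRel v u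
  symm := ⟨fun _ _ h => Or.symm h⟩
  loopless := ⟨by
    show ∀ a, ¬(paperRel a a ∨ paperRel a a)
    decide⟩

/-!
The constant vector `2/5` lies in HSTAB(G): the graph is triangle-free, so cliques have at most
two vertices and odd cycles at least five. Summing the odd-cycle inequalities of the seven
5-cycles `x_i x_{i+1} y_{i+1} z_i y_i` and of the 7-cycle `z_0 z_3 z_6 z_2 z_5 z_1 z_4` gives
`2 f⁺(V) ≤ 17` on HSTAB(G). A stable set has integral size, so it has at most `8` vertices, and
`f⁺(V) ≤ 8` on STAB(G); the constant vector `2/5` has `f⁺(V) = 42/5`.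
-/

open Function Finset

section HSTAB

lemma finsum_mem_const_eq_ncard_mul {s : Set V} (hs : s.Finite) (c : ℝ) :
    ∑ᶠ v ∈ s, c = s.ncard * c := by
  rw [finsum_mem_eq_finite_toFinset_sum _ hs, Finset.sum_const, nsmul_eq_mul,
    Set.ncard_eq_toFinset_card _ hs]

lemma finsum_mem_indicator_one {K : Set V} (hK : K.Finite) (S : Set V) :
    ∑ᶠ v ∈ K, S.indicator (1 : V → ℝ) v = (K ∩ S).ncard := by
  rw [finsum_mem_def, Set.indicator_indicator, ← finsum_mem_def]
  exact (finsum_mem_const_eq_ncard_mul (hK.inter_of_left S) 1).trans (mul_one _)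

lemma sum_indicator_one_eq_ncard [Fintype V] (S : Set V) :
    ∑ v, S.indicator (1 : V → ℝ) v = S.ncard := by
  rw [← finsum_eq_sum_of_fintype, ← finsum_mem_univ, finsum_mem_indicator_one Set.finite_univ,
    Set.univ_inter]

lemma finsum_mem_range_eq_sum {m : ℕ} [NeZero m] {c : ZMod m → V} (hc : Injective c)
    (f : V → ℝ) : ∑ᶠ v ∈ Set.range c, f v = ∑ i, f (c i) := by
  rw [finsum_mem_range hc, finsum_eq_sum_of_fintype]

lemma isLinearMap_finsum_mem {s : Set V} (hs : s.Finite) :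
    IsLinearMap ℝ fun f : V → ℝ => ∑ᶠ v ∈ s, f v :=
  ⟨fun _ _ => finsum_mem_add_distrib hs, fun _ _ => by
    simp only [Pi.smul_apply]
    exact (smul_finsum_mem hs).symm⟩

lemma convex_memHSTAB [Finite V] (G : SimpleGraph V) : Convex ℝ {f | memHSTAB G f} := by
  intro f hf g hg a b ha hb hab
  refine ⟨fun x => add_nonneg (mul_nonneg ha (hf.1 x)) (mul_nonneg hb (hg.1 x)),
    fun K hK => ?_, fun C hC => ?_⟩
  · exact convex_halfSpace_le (isLinearMap_finsum_mem K.toFinite) 1 (hf.2.1 K hK) (hg.2.1 K hK)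
      ha hb hab
  · exact convex_halfSpace_le (isLinearMap_finsum_mem C.toFinite) _ (hf.2.2 C hC) (hg.2.2 C hC)
      ha hb hab

lemma memHSTAB.sum_le_of_oddCycle {G : SimpleGraph V} {f : V → ℝ} (hf : memHSTAB G f)
    {m : ℕ} [NeZero m] (hm : 3 ≤ m) (hodd : Odd m) {c : ZMod m → V} (hc : Injective c)
    (hadj : ∀ i, G.Adj (c i) (c (i + 1))) : ∑ i, f (c i) ≤ ((m : ℝ) - 1) / 2 := by
  have := hf.2.2 _ ⟨m, c, hm, hodd, hc, hadj, rfl⟩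
  rwa [finsum_mem_range_eq_sum hc, Set.ncard_range_of_injective hc, Nat.card_zmod] at this

end HSTAB

section StableSets

variable {G : SimpleGraph V} {S : Set V}

lemma ZMod.two_mul_card_le_of_forall_add_one_notMem {m : ℕ} [NeZero m] {A : Finset (ZMod m)}
    (hA : ∀ i ∈ A, i + 1 ∉ A) : 2 * #A ≤ m := by
  have hdisj : Disjoint A (A.map (Equiv.addRight 1).toEmbedding) := by
    refine Finset.disjoint_left.2 fun i hi hi' => ?_
    obtain ⟨j, hj, rfl⟩ := Finset.mem_map.1 hi'
    exact hA j hj hi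
  calc 2 * #A = #(A ∪ A.map (Equiv.addRight 1).toEmbedding) := by
        rw [card_union_of_disjoint hdisj, card_map, two_mul]
    _ ≤ #(univ : Finset (ZMod m)) := card_le_univ _
    _ = m := ZMod.card m

lemma IsStableSet.ncard_inter_le_one_of_isClique (hS : IsStableSet G S) {K : Set V}
    (hK : G.IsClique K) (hfin : (K ∩ S).Finite) : (K ∩ S).ncard ≤ 1 :=
  (Set.ncard_le_one hfin).2 fun a ha b hb =>
    by_contra fun hab => hS a ha.2 b hb.2 (hK ha.1 hb.1 hab)

lemma IsStableSet.two_mul_ncard_inter_le_of_isCycleSet (hS : IsStableSet G S) {C : Set V}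
    (hC : IsCycleSet G C) : 2 * (C ∩ S).ncard ≤ C.ncard := by
  classical
  obtain ⟨m, c, hm, hc, hadj, rfl⟩ := hC
  have : NeZero m := ⟨by omega⟩
  have hinter : Set.range c ∩ S = c '' ↑(univ.filter fun i => c i ∈ S) := by
    ext v
    simp only [Set.mem_inter_iff, Set.mem_range, Set.mem_image, coe_filter, mem_univ, true_and]
    constructor
    · rintro ⟨⟨i, rfl⟩, hi⟩; exact ⟨i, hi, rfl⟩
    · rintro ⟨i, hi, rfl⟩; exact ⟨⟨i, rfl⟩, hi⟩
  rw [hinter, Set.ncard_image_of_injective _ hc, Set.ncard_coe_finset,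
    Set.ncard_range_of_injective hc, Nat.card_zmod]
  refine ZMod.two_mul_card_le_of_forall_add_one_notMem fun i hi hi' => ?_
  exact hS _ (mem_filter.1 hi).2 _ (mem_filter.1 hi').2 (hadj i)

lemma IsStableSet.memHSTAB_indicator [Finite V] (hS : IsStableSet G S) :
    memHSTAB G (S.indicator 1) := by
  refine ⟨Set.indicator_nonneg fun _ _ => zero_le_one, fun K hK => ?_, fun C hC => ?_⟩
  · rw [finsum_mem_indicator_one K.toFinite]
    exact_mod_cast hS.ncard_inter_le_one_of_isClique hK (Set.toFinite _)
  · obtain ⟨m, c, hm, hodd, hc, hadj, rfl⟩ := hC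
    have hcount := hS.two_mul_ncard_inter_le_of_isCycleSet ⟨m, c, hm, hc, hadj, rfl⟩
    have : NeZero m := ⟨by omega⟩
    rw [Set.ncard_range_of_injective hc, Nat.card_zmod] at hcount ⊢
    rw [finsum_mem_indicator_one (Set.toFinite _)]
    have hodd_count : ((2 * (Set.range c ∩ S).ncard + 1 : ℕ) : ℝ) ≤ m := by
      obtain ⟨k, rfl⟩ := hodd
      exact_mod_cast (by omega)
    push_cast at hodd_count
    linarith

lemma STAB_subset_memHSTAB [Finite V] (G : SimpleGraph V) : STAB G ⊆ {f | memHSTAB G f} :=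
  convexHull_min (by rintro _ ⟨S, hS, rfl⟩; exact hS.memHSTAB_indicator) (convex_memHSTAB G)

end StableSets

section TriangleFree

variable {G : SimpleGraph V}

lemma SimpleGraph.IsClique.ncard_le_two [Finite V] (hG : G.CliqueFree 3) {K : Set V}
    (hK : G.IsClique K) : K.ncard ≤ 2 := by
  classical
  by_contra! h
  obtain ⟨a, b, c, ha, hb, hc, hab, hac, hbc⟩ := (Set.two_lt_ncard_iff K.toFinite).1 h
  exact hG {a, b, c}
    (SimpleGraph.is3Clique_triple_iff.2 ⟨hK ha hb hab, hK ha hc hac, hK hb hc hbc⟩)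

lemma IsOddCycleSet.five_le_ncard (hG : G.CliqueFree 3) {C : Set V} (hC : IsOddCycleSet G C) :
    5 ≤ C.ncard := by
  classical
  obtain ⟨m, c, hm, hodd, hc, hadj, rfl⟩ := hC
  have : NeZero m := ⟨by omega⟩
  rw [Set.ncard_range_of_injective hc, Nat.card_zmod]
  obtain ⟨k, rfl⟩ := hodd
  obtain rfl | hk : k = 1 ∨ 2 ≤ k := by omega
  · exact (hG {c 0, c 1, c 2} <| SimpleGraph.is3Clique_triple_iff.2
      ⟨hadj 0, (hadj 2).symm, hadj 1⟩).elim
  · omega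

lemma memHSTAB_const_of_cliqueFree [Finite V] (hG : G.CliqueFree 3) :
    memHSTAB G fun _ => (2 / 5 : ℝ) := by
  refine ⟨fun _ => by norm_num, fun K hK => ?_, fun C hC => ?_⟩
  · rw [finsum_mem_const_eq_ncard_mul K.toFinite]
    have : (K.ncard : ℝ) ≤ 2 := by exact_mod_cast hK.ncard_le_two hG
    linarith
  · rw [finsum_mem_const_eq_ncard_mul C.toFinite]
    have : (5 : ℝ) ≤ C.ncard := by exact_mod_cast hC.five_le_ncard hG
    linarith

end TriangleFree

namespace paperGraph

open Vtx

instance : DecidableRel paperGraph.Adj := fun u v =>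
  inferInstanceAs (Decidable (paperRel u v ∨ paperRel v u))

lemma cliqueFree_three : paperGraph.CliqueFree 3 := by
  have hno_triangle :
      ∀ a b c, paperGraph.Adj a b → paperGraph.Adj a c → ¬ paperGraph.Adj b c := by
    decide
  intro s hs
  obtain ⟨a, b, c, hab, hac, hbc, rfl⟩ := SimpleGraph.is3Clique_iff.1 hs
  exact hno_triangle a b c hab hac hbc

def pentagon (i : ZMod 7) : ZMod 5 → Vtx := ![x i, x (i + 1), y (i + 1), z i, y i]

def heptagon (j : ZMod 7) : Vtx := z (3 * j)

lemma pentagon_injective : ∀ i, Injective (pentagon i) := by decide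

lemma pentagon_adj : ∀ i j, paperGraph.Adj (pentagon i j) (pentagon i (j + 1)) := by decide

lemma heptagon_injective : Injective heptagon := by decide

lemma heptagon_adj : ∀ j, paperGraph.Adj (heptagon j) (heptagon (j + 1)) := by decide

lemma sum_univ_eq (f : Vtx → ℝ) :
    ∑ v, f v = ∑ i, f (x i) + ∑ i, f (y i) + ∑ i, f (z i) := by
  rw [← Vtx.proxyTypeEquiv.sum_comp, Fintype.sum_sum_type, Fintype.sum_sum_type, add_assoc]
  rfl

/-- Every `x_i` and `y_i` lies on two of the pentagons and every `z_i` on one, and the heptagon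
passes once through each `z_i`. -/
lemma two_mul_sum_eq (f : Vtx → ℝ) :
    2 * ∑ v, f v = ∑ i, ∑ j, f (pentagon i j) + ∑ j, f (heptagon j) := by
  have hx : ∑ i, f (x (i + 1)) = ∑ i, f (x i) := Equiv.sum_comp (Equiv.addRight 1) (f ∘ x)
  have hy : ∑ i, f (y (i + 1)) = ∑ i, f (y i) := Equiv.sum_comp (Equiv.addRight 1) (f ∘ y)
  have hz : ∑ j, f (heptagon j) = ∑ i, f (z i) :=
    Equiv.sum_comp (Units.mulLeft (ZMod.unitOfCoprime (n := 7) 3 (by norm_num))) (f ∘ z)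
  have hpent (i : ZMod 7) : ∑ j, f (pentagon i j) =
      f (x i) + f (x (i + 1)) + f (y (i + 1)) + f (z i) + f (y i) :=
    Fin.sum_univ_five (f ∘ pentagon i)
  simp only [hpent, hz, sum_add_distrib, hx, hy, sum_univ_eq]
  ring

lemma two_mul_sum_le_of_memHSTAB {f : Vtx → ℝ} (hf : memHSTAB paperGraph f) :
    2 * ∑ v, f v ≤ 17 := by
  have hpent (i : ZMod 7) : ∑ j, f (pentagon i j) ≤ 2 := by
    have := hf.sum_le_of_oddCycle (by norm_num) (by decide) (pentagon_injective i) (pentagon_adj i)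
    norm_num at this
    exact this
  have hhept : ∑ j, f (heptagon j) ≤ 3 := by
    have := hf.sum_le_of_oddCycle (by norm_num) (by decide) heptagon_injective heptagon_adj
    norm_num at this
    exact this
  calc 2 * ∑ v, f v = ∑ i, ∑ j, f (pentagon i j) + ∑ j, f (heptagon j) := two_mul_sum_eq f
    _ ≤ ∑ _i : ZMod 7, 2 + 3 := add_le_add (sum_le_sum fun i _ => hpent i) hhept
    _ = 17 := by norm_num

lemma ncard_le_eight_of_isStableSet {S : Set Vtx} (hS : IsStableSet paperGraph S) :
    S.ncard ≤ 8 := by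
  have h := two_mul_sum_le_of_memHSTAB hS.memHSTAB_indicator
  rw [sum_indicator_one_eq_ncard] at h
  have : 2 * S.ncard ≤ 17 := by exact_mod_cast h
  omega

lemma sum_le_eight_of_mem_STAB {f : Vtx → ℝ} (hf : f ∈ STAB paperGraph) :
    ∑ v, f v ≤ 8 := by
  refine convexHull_min (t := {w | ∑ v, w v ≤ 8}) ?_ (convex_halfSpace_le ?_ 8) hf
  · rintro _ ⟨S, hS, rfl⟩
    rw [Set.mem_ofPred, sum_indicator_one_eq_ncard]
    exact_mod_cast ncard_le_eight_of_isStableSet hS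
  · exact ⟨fun _ _ => sum_add_distrib, fun _ _ => by simp only [Pi.smul_apply, smul_sum]⟩

end paperGraph

/-- for the example graph, STAB(G) is a proper subset of
HSTAB(G); in particular the graph is not h-perfect. -/
theorem stmt18 : STAB paperGraph ⊂ {f : Vtx → ℝ | memHSTAB paperGraph f} := by
  refine (Set.ssubset_iff_of_subset (STAB_subset_memHSTAB paperGraph)).2
    ⟨fun _ => 2 / 5, memHSTAB_const_of_cliqueFree paperGraph.cliqueFree_three, fun h => ?_⟩
  have := paperGraph.sum_le_eight_of_mem_STAB h
  rw [sum_const, card_univ, show Fintype.card Vtx = 21 from rfl, nsmul_eq_mul] at this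
  norm_num at this
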